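/- arXiv:2506.10603 — 5 statements merged into one kernel-verified Lean document; each statement's English description precedes it below -/
import Mathlib

section
/- Let T be a retract of a monoid S. Then for all a, b ∈ T, we have Ta ⊆ Tb if and only if Sa ⊆ Sb, where for a monoid M and c ∈ M we write Mc = {mc : m ∈ M}. -/
/-! Common definitions for graph products of monoids. -/

variable {V : Type*}

/-- A letter of the graph product alphabet: an element of one of the vertex monoids,
tagged by its vertex (its *support*). -/
abbrev GPLetter (M : V → Type*) : Type _ := (α : V) × M α

/-- The defining relations of the graph product: identity letters are trivial,
letters from the same vertex monoid multiply, and letters at adjacent vertices commute. -/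
def gpRel (G : SimpleGraph V) (M : V → Type*) [∀ α, Monoid (M α)] :
    FreeMonoid (GPLetter M) → FreeMonoid (GPLetter M) → Prop := fun w₁ w₂ =>
  (∃ α : V, w₁ = FreeMonoid.of (⟨α, (1 : M α)⟩ : GPLetter M) ∧ w₂ = 1) ∨
  (∃ (α : V) (x y : M α),
      w₁ = FreeMonoid.of (⟨α, x⟩ : GPLetter M) * FreeMonoid.of (⟨α, y⟩ : GPLetter M) ∧
      w₂ = FreeMonoid.of (⟨α, x * y⟩ : GPLetter M)) ∨
  (∃ (α β : V) (x : M α) (y : M β), G.Adj α β ∧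
      w₁ = FreeMonoid.of (⟨α, x⟩ : GPLetter M) * FreeMonoid.of (⟨β, y⟩ : GPLetter M) ∧
      w₂ = FreeMonoid.of (⟨β, y⟩ : GPLetter M) * FreeMonoid.of (⟨α, x⟩ : GPLetter M))

/-- The congruence on the free monoid generated by the graph product relations. -/
def gpCon (G : SimpleGraph V) (M : V → Type*) [∀ α, Monoid (M α)] :
    Con (FreeMonoid (GPLetter M)) := conGen (gpRel G M)

/-- The graph product of the monoids `M α` with respect to the graph `G`. -/
abbrev GraphProduct (G : SimpleGraph V) (M : V → Type*) [∀ α, Monoid (M α)] :=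
  (gpCon G M).Quotient

/-- The class `[w]` in the graph product of a word `w` (given as a list of letters). -/
def gpMk (G : SimpleGraph V) (M : V → Type*) [∀ α, Monoid (M α)]
    (l : List (GPLetter M)) : GraphProduct G M :=
  (gpCon G M).mk' (FreeMonoid.ofList l)

/-- A word is reduced: no letter is an identity, and between any two letters with the
same support there is a letter whose support is not adjacent to it. -/
def GPReduced (G : SimpleGraph V) (M : V → Type*) [∀ α, Monoid (M α)]
    (l : List (GPLetter M)) : Prop :=
  (∀ x ∈ l, x.2 ≠ 1) ∧
    ∀ i j : Fin l.length, i < j → (l.get i).1 = (l.get j).1 →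
      ∃ k : Fin l.length, i < k ∧ k < j ∧ ¬ G.Adj (l.get i).1 (l.get k).1

/-- One shuffle: transpose an adjacent pair of letters whose supports are adjacent in `G`. -/
def ShuffleStep (G : SimpleGraph V) (M : V → Type*)
    (l₁ l₂ : List (GPLetter M)) : Prop :=
  ∃ (u v : List (GPLetter M)) (x y : GPLetter M),
    G.Adj x.1 y.1 ∧ l₁ = u ++ x :: y :: v ∧ l₂ = u ++ y :: x :: v

/-- Two words are shuffle equivalent if one is obtained from the other by a finite
sequence of shuffles. -/
def ShuffleEquiv (G : SimpleGraph V) (M : V → Type*) :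
    List (GPLetter M) → List (GPLetter M) → Prop :=
  Relation.ReflTransGen (ShuffleStep G M)

/-- A letter is left invertible if it is left invertible in its vertex monoid. -/
def LeftInvertibleLetter (M : V → Type*) [∀ α, Monoid (M α)] (x : GPLetter M) : Prop :=
  ∃ y : M x.1, y * x.2 = 1

/-- The set of supports of the letters of a word. -/
def suppSet (M : V → Type*) (l : List (GPLetter M)) : Set V := {α | ∃ x ∈ l, x.1 = α}

/-- A complete block: a reduced word whose support induces a complete subgraph of `G`. -/
def CompleteBlock (G : SimpleGraph V) (M : V → Type*) [∀ α, Monoid (M α)]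
    (l : List (GPLetter M)) : Prop :=
  GPReduced G M l ∧ ∀ x ∈ l, ∀ y ∈ l, x.1 ≠ y.1 → G.Adj x.1 y.1

/-- A list of blocks is a left Foata normal form: the concatenation is reduced, each
block is nonempty with complete support, and each letter of a block fails to be
adjacent to some letter of the preceding block. -/
def LeftFoataForm (G : SimpleGraph V) (M : V → Type*) [∀ α, Monoid (M α)]
    (blocks : List (List (GPLetter M))) : Prop :=
  GPReduced G M blocks.flatten ∧
  (∀ b ∈ blocks, b ≠ [] ∧ ∀ x ∈ b, ∀ y ∈ b, x.1 ≠ y.1 → G.Adj x.1 y.1) ∧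
  List.Chain' (fun b₁ b₂ => ∀ y ∈ b₂, ∃ x ∈ b₁, ¬ G.Adj x.1 y.1) blocks

/-- The principal left ideal `S a = {s * a : s ∈ S}` of a monoid. -/
def plIdeal {S : Type*} [Monoid S] (a : S) : Set S := Set.range (· * a)

/-- The ascending chain condition on principal left ideals. -/
def ACCPL (S : Type*) [Monoid S] : Prop :=
  ∀ a : ℕ → S, (∀ n, plIdeal (a n) ⊆ plIdeal (a (n + 1))) →
    ∃ n, ∀ k, plIdeal (a (n + k)) = plIdeal (a n)

/-- `A` is a left ideal of the monoid `S`. -/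
def IsLeftIdeal {S : Type*} [Monoid S] (A : Set S) : Prop :=
  A.Nonempty ∧ ∀ s : S, ∀ a ∈ A, s * a ∈ A

/-- `A` is generated, as a left ideal, by a finite subset of itself. -/
def IsFGLeftIdeal {S : Type*} [Monoid S] (A : Set S) : Prop :=
  ∃ F : Finset S, ↑F ⊆ A ∧ A = {x | ∃ s : S, ∃ a ∈ F, x = s * a}

/-- A monoid is weakly left noetherian if every left ideal is finitely generated. -/
def WeaklyLeftNoetherian (S : Type*) [Monoid S] : Prop :=
  ∀ A : Set S, IsLeftIdeal A → IsFGLeftIdeal A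

/-- A monoid is left ideal Howson if the intersection of any two principal left ideals
is empty or finitely generated. -/
def LeftIdealHowson (S : Type*) [Monoid S] : Prop :=
  ∀ a b : S, plIdeal a ∩ plIdeal b = ∅ ∨ IsFGLeftIdeal (plIdeal a ∩ plIdeal b)

/-- An LCM monoid: intersections of principal left ideals are empty or principal. -/
def LCMMonoid (S : Type*) [Monoid S] : Prop :=
  ∀ a b : S, plIdeal a ∩ plIdeal b = ∅ ∨ ∃ c : S, plIdeal a ∩ plIdeal b = plIdeal c

/-- A left congruence on a monoid. -/
def IsLeftCongruence {S : Type*} [Monoid S] (ρ : S → S → Prop) : Prop :=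
  Equivalence ρ ∧ ∀ u s t : S, ρ s t → ρ (u * s) (u * t)

/-- The least left congruence containing a set of pairs. -/
def leftConGen {S : Type*} [Monoid S] (R : Set (S × S)) : S → S → Prop := fun s t =>
  ∀ ρ : S → S → Prop, IsLeftCongruence ρ → (∀ p ∈ R, ρ p.1 p.2) → ρ s t

/-- A monoid is finitely left equated if every left annihilator `l(a)` is the left
congruence generated by a finite set. -/
def FinitelyLeftEquated (S : Type*) [Monoid S] : Prop :=
  ∀ a : S, ∃ R : Set (S × S), R.Finite ∧ ∀ s t : S, s * a = t * a ↔ leftConGen R s t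

/-- A monoid is a group: every element has a two-sided inverse. -/
def IsGroupMonoid (S : Type*) [Monoid S] : Prop :=
  ∀ a : S, ∃ b : S, a * b = 1 ∧ b * a = 1

/-- Weakly left coherent: left ideal Howson and finitely left equated. -/
def WeaklyLeftCoherent (S : Type*) [Monoid S] : Prop :=
  LeftIdealHowson S ∧ FinitelyLeftEquated S

/-- The restricted direct product of a family of monoids: elements of the direct
product with only finitely many non-identity coordinates. -/
def restrictedDirectProduct {ι : Type*} (M : ι → Type*) [∀ i, Monoid (M i)] :
    Submonoid (∀ i, M i) where
  carrier := {f | {i | f i ≠ 1}.Finite}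
  one_mem' := by simp
  mul_mem' := by
    intro f g hf hg
    refine Set.Finite.subset (hf.union hg) ?_
    intro i hi
    rw [Set.mem_union]
    by_contra h
    push_neg at h
    obtain ⟨h1, h2⟩ := h
    simp only [Set.mem_setOf_eq, not_not] at h1 h2
    apply hi
    show f i * g i = 1
    rw [h1, h2, one_mul]

/-- Condition (i) for relative completeness: both monoids have two elements, at least
one is not a group, and both vertices are adjacent to every other vertex. -/
def RCcondI (G : SimpleGraph V) (M : V → Type*) [∀ α, Monoid (M α)]
    (α β : V) : Prop :=
  Nat.card (M α) = 2 ∧ Nat.card (M β) = 2 ∧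
  (¬ IsGroupMonoid (M α) ∨ ¬ IsGroupMonoid (M β)) ∧
  ∀ γ : V, γ ≠ α → γ ≠ β → G.Adj α γ ∧ G.Adj β γ

/-- `G` is relatively complete with respect to the family `M` of vertex monoids. -/
def RelativelyComplete (G : SimpleGraph V) (M : V → Type*)
    [∀ α, Monoid (M α)] : Prop :=
  (∀ α β : V, α ≠ β → ¬ G.Adj α β →
      RCcondI G M α β ∨ (IsGroupMonoid (M α) ∧ IsGroupMonoid (M β))) ∧
  ∀ α β α' β' : V, α ≠ β → ¬ G.Adj α β → RCcondI G M α β →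
    α' ≠ β' → ¬ G.Adj α' β' → RCcondI G M α' β' →
    (α = α' ∧ β = β') ∨ (α = β' ∧ β = α')

/-- for a retract `T` of `S` and `a, b ∈ T`, `Ta ⊆ Tb ↔ Sa ⊆ Sb`. -/
theorem stmt1 {S : Type*} [Monoid S] (T : Submonoid S) (θ : S →* S)
    (hrange : Set.range θ = (T : Set S)) (hid : ∀ t ∈ T, θ t = t)
    (a b : S) (ha : a ∈ T) (hb : b ∈ T) :
    {x : S | ∃ t ∈ T, x = t * a} ⊆ {x : S | ∃ t ∈ T, x = t * b} ↔
      plIdeal a ⊆ plIdeal b := by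
  constructor
  · intro h x hx
    obtain ⟨s, rfl⟩ := hx
    have : a ∈ {x : S | ∃ t ∈ T, x = t * a} := ⟨1, T.one_mem, (one_mul a).symm⟩
    obtain ⟨t, ht, hab⟩ := h this
    exact ⟨s * t, by simp [hab, mul_assoc]⟩
  · intro h x hx
    obtain ⟨t, ht, rfl⟩ := hx
    obtain ⟨s, hs⟩ := h ⟨t, rfl⟩
    have hθs : θ s ∈ T := by rw [← SetLike.mem_coe, ← hrange]; exact Set.mem_range_self s
    refine ⟨θ s, hθs, ?_⟩
    have := congrArg θ hs.symm
    rwa [map_mul, map_mul, hid t ht, hid a ha, hid b hb] at this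
end

section
/- If T is a retract of a monoid S and S satisfies the ascending chain condition on principal left ideals, then T satisfies the ascending chain condition on principal left ideals. -/
/-! Common definitions for graph products of monoids. -/

variable {V : Type*}

lemma plIdeal_subset_of_mem {M : Type*} [Monoid M] (b c : M) (h : ∃ s, s * c = b) :
    plIdeal b ⊆ plIdeal c := by
  obtain ⟨s, hs⟩ := h
  rintro x ⟨u, hu⟩
  exact ⟨u * s, by show u * s * c = x; rw [mul_assoc, hs]; exact hu⟩

/-- ACCPL passes to retracts. -/
theorem stmt2 {S : Type*} [Monoid S] (T : Submonoid S) (θ : S →* S)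
    (hrange : Set.range θ = (T : Set S)) (hid : ∀ t ∈ T, θ t = t)
    (hS : ACCPL S) : ACCPL T := by
  -- helper: plIdeal containment from membership
  intro a ha
  have ha' : ∀ n, plIdeal ((a n : S)) ⊆ plIdeal ((a (n + 1) : S)) := by
    intro n
    obtain ⟨t, ht⟩ : (a n : T) ∈ plIdeal (a (n + 1)) := ha n ⟨1, one_mul _⟩
    refine plIdeal_subset_of_mem (M := S) _ _ ⟨(t : S), ?_⟩
    exact_mod_cast congrArg (Subtype.val) ht
  obtain ⟨n, hn⟩ := hS (fun n => (a n : S)) ha'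
  refine ⟨n, fun k => ?_⟩
  apply Set.Subset.antisymm
  · -- a (n+k) ∈ T * a n via θ
    have h1 : ((a (n + k) : S)) ∈ plIdeal ((a n : S)) := by
      rw [← hn k]; exact ⟨1, one_mul _⟩
    obtain ⟨s, hs⟩ := h1
    have hθs : θ s ∈ T := by
      have h2 : θ s ∈ (T : Set S) := by rw [← hrange]; exact ⟨s, rfl⟩
      exact h2
    refine plIdeal_subset_of_mem (M := T) _ _ ⟨⟨θ s, hθs⟩, ?_⟩
    have : θ s * (a n : S) = (a (n + k) : S) := by
      have := congrArg θ hs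
      rw [map_mul, hid _ (a n).2, hid _ (a (n + k)).2] at this
      exact this
    exact Subtype.ext this
  · -- chain direction
    induction k with
    | zero => exact subset_rfl
    | succ k ih => exact (ih).trans (ha (n + k))
end

section
/- Let a ∈ M_α∖{1_α} and b ∈ M_β∖{1_β} be letters such that b is not left invertible in M_β. Then GP[a] ⊆ GP[b] if and only if α = β and M_α a ⊆ M_α b. Consequently, if in addition a is not left invertible, then GP[a] = GP[b] if and only if α = β and M_α a = M_α b. -/
/-! Common definitions for graph products of monoids. -/

variable {V : Type*}

lemma plIdeal_subset_plIdeal_iff {S : Type*} [Monoid S] (a b : S) :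
    plIdeal a ⊆ plIdeal b ↔ ∃ s, s * b = a :=
  ⟨fun h => h ⟨1, one_mul a⟩,
    fun ⟨s, hs⟩ _ ⟨t, ht⟩ => ⟨t * s, by simp only [← ht, ← hs, mul_assoc]⟩⟩

section ToPi

variable (G : SimpleGraph V) (M : V → Type*) [∀ α, Monoid (M α)]

def gpToPi [DecidableEq V] : GraphProduct G M →* ∀ γ, M γ :=
  (gpCon G M).lift (FreeMonoid.lift fun x : GPLetter M => Pi.mulSingle x.1 x.2) <| by
    refine Con.conGen_le.mpr ?_
    rintro w₁ w₂ (⟨α, rfl, rfl⟩ | ⟨α, x, y, rfl, rfl⟩ | ⟨α, β, x, y, hadj, rfl, rfl⟩) <;>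
      simp only [Con.ker_rel, map_mul, map_one, FreeMonoid.lift_eval_of]
    · exact Pi.mulSingle_one α
    · exact (Pi.mulSingle_mul α x y).symm
    · exact Pi.mulSingle_commute hadj.ne x y

lemma gpToPi_gpMk_singleton [DecidableEq V] (x : GPLetter M) :
    gpToPi G M (gpMk G M [x]) = Pi.mulSingle x.1 x.2 :=
  ((gpCon G M).lift_mk' _ _).trans (FreeMonoid.lift_eval_of _ _)

lemma gpMk_singleton_mul_gpMk_singleton (α : V) (x y : M α) :
    gpMk G M [⟨α, x⟩] * gpMk G M [⟨α, y⟩] = gpMk G M [⟨α, x * y⟩] :=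
  (Con.eq _).mpr <| ConGen.Rel.of _ _ <| Or.inr <| Or.inl ⟨α, x, y, rfl, rfl⟩

end ToPi

section SingleLetterIdeals

variable (G : SimpleGraph V) (M : V → Type*) [∀ α, Monoid (M α)] {α β : V}

/-- Reading `g [b] = [a]` in the coordinate `β` gives `g_β b = a_β`; if `α ≠ β` this makes `b`
left invertible. -/
lemma plIdeal_gpMk_singleton_subset_iff (a : M α) (b : M β)
    (hb : ¬ ∃ b' : M β, b' * b = 1) :
    plIdeal (gpMk G M [⟨α, a⟩]) ⊆ plIdeal (gpMk G M [⟨β, b⟩]) ↔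
      ∃ h : α = β, plIdeal a ⊆ plIdeal (cast (congrArg M h).symm b) := by
  classical
  simp only [plIdeal_subset_plIdeal_iff]
  constructor
  · rintro ⟨g, hg⟩
    have hβ := congrArg (fun g => gpToPi G M g β) hg
    simp only [map_mul, Pi.mul_apply, gpToPi_gpMk_singleton, Pi.mulSingle_eq_same] at hβ
    obtain rfl : α = β := by
      by_contra hne
      rw [Pi.mulSingle_eq_of_ne' hne] at hβ
      exact hb ⟨_, hβ⟩
    rw [Pi.mulSingle_eq_same] at hβ
    exact ⟨rfl, _, hβ⟩
  · rintro ⟨rfl, s, hs⟩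
    exact ⟨gpMk G M [⟨α, s⟩], by rw [gpMk_singleton_mul_gpMk_singleton, ← hs, cast_eq]⟩

lemma plIdeal_gpMk_singleton_eq_iff (a : M α) (b : M β)
    (ha : ¬ ∃ a' : M α, a' * a = 1) (hb : ¬ ∃ b' : M β, b' * b = 1) :
    plIdeal (gpMk G M [⟨α, a⟩]) = plIdeal (gpMk G M [⟨β, b⟩]) ↔
      ∃ h : α = β, plIdeal a = plIdeal (cast (congrArg M h).symm b) := by
  constructor
  · intro h
    obtain ⟨rfl, hab⟩ := (plIdeal_gpMk_singleton_subset_iff G M a b hb).mp h.le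
    obtain ⟨_, hba⟩ := (plIdeal_gpMk_singleton_subset_iff G M b a ha).mp h.ge
    exact ⟨rfl, hab.antisymm hba⟩
  · rintro ⟨rfl, h⟩
    exact ((plIdeal_gpMk_singleton_subset_iff G M a b hb).mpr ⟨rfl, h.le⟩).antisymm
      ((plIdeal_gpMk_singleton_subset_iff G M b a ha).mpr ⟨rfl, h.ge⟩)

end SingleLetterIdeals

theorem stmt4_general {V : Type*} (G : SimpleGraph V) (M : V → Type*) [∀ α, Monoid (M α)]
    {α β : V} (a : M α) (b : M β)
    (hb : ¬ ∃ b' : M β, b' * b = 1) :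
    (plIdeal (gpMk G M [⟨α, a⟩]) ⊆ plIdeal (gpMk G M [⟨β, b⟩]) ↔
      ∃ h : α = β, Set.range (fun m : M α => m * a) ⊆
        Set.range (fun m : M α => m * (cast (congrArg M h).symm b))) ∧
    ((¬ ∃ a' : M α, a' * a = 1) →
      (plIdeal (gpMk G M [⟨α, a⟩]) = plIdeal (gpMk G M [⟨β, b⟩]) ↔
        ∃ h : α = β, Set.range (fun m : M α => m * a) =
          Set.range (fun m : M α => m * (cast (congrArg M h).symm b)))) :=
  ⟨plIdeal_gpMk_singleton_subset_iff G M a b hb,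
    fun ha => plIdeal_gpMk_singleton_eq_iff G M a b ha hb⟩

/-- comparison of principal left ideals generated by single letters. -/
theorem stmt4 {V : Type*} (G : SimpleGraph V) (M : V → Type*) [∀ α, Monoid (M α)]
    {α β : V} (a : M α) (b : M β)
    (ha1 : a ≠ 1) (hb1 : b ≠ 1) (hb : ¬ ∃ b' : M β, b' * b = 1) :
    (plIdeal (gpMk G M [⟨α, a⟩]) ⊆ plIdeal (gpMk G M [⟨β, b⟩]) ↔
      ∃ h : α = β, Set.range (fun m : M α => m * a) ⊆
        Set.range (fun m : M α => m * (cast (congrArg M h).symm b))) ∧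
    ((¬ ∃ a' : M α, a' * a = 1) →
      (plIdeal (gpMk G M [⟨α, a⟩]) = plIdeal (gpMk G M [⟨β, b⟩]) ↔
        ∃ h : α = β, Set.range (fun m : M α => m * a) =
          Set.range (fun m : M α => m * (cast (congrArg M h).symm b)))) :=
  stmt4_general G M a b hb
end

section
/- Let a = a_1∘⋯∘a_n ∈ X* be a complete block containing no left invertible letters. Then GP[a] = ⋂_{1 ≤ i ≤ n} GP[a_i]. -/
/-! Common definitions for graph products of monoids. -/

variable {V : Type*}

/-!
If `g = s a_i` and `a_i` is not left invertible, then `a_i` cannot cancel when the normal form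
of `s a_i` is computed by multiplying in one letter at a time: a letter of the vertex of `a_i`
that is a left multiple of `a_i` survives, separated from the right end only by letters
commuting with `a_i`. Since the defining relations act on these normal forms by shuffles only,
this property depends on `g` alone. The letters of a complete block commute pairwise and lie
at distinct vertices, so these right factors can be split off one after the other, giving
`g ∈ GP a`. Conversely each `a_i` commutes with the letters after it, so `GP a ⊆ GP a_i`.
-/

section PrincipalLeftIdeal

variable {S : Type*} [Monoid S]

theorem mul_mem_plIdeal {a b : S} (s : S) (h : b ∈ plIdeal a) : s * b ∈ plIdeal a := by
  obtain ⟨r, rfl⟩ := h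
  exact ⟨s * r, mul_assoc s r a⟩

theorem plIdeal_subset_of_mem_s5 {a b : S} (h : b ∈ plIdeal a) : plIdeal b ⊆ plIdeal a := by
  rintro _ ⟨s, rfl⟩
  exact mul_mem_plIdeal s h

end PrincipalLeftIdeal

theorem ShuffleStep.symm {G : SimpleGraph V} {M : V → Type*} {t t' : List (GPLetter M)}
    (h : ShuffleStep G M t t') : ShuffleStep G M t' t := by
  obtain ⟨u, v, x, y, hadj, rfl, rfl⟩ := h
  exact ⟨u, v, y, x, hadj.symm, rfl, rfl⟩

namespace ShuffleEquiv

variable {G : SimpleGraph V} {M : V → Type*} {t t' : List (GPLetter M)}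

theorem symm (h : ShuffleEquiv G M t t') : ShuffleEquiv G M t' t := by
  induction h with
  | refl => exact .refl
  | tail _ hstep ih => exact .head hstep.symm ih

theorem swap_append (u v : List (GPLetter M)) {x y : GPLetter M} (h : G.Adj x.1 y.1) :
    ShuffleEquiv G M (u ++ x :: y :: v) (u ++ y :: x :: v) :=
  .single ⟨u, v, x, y, h, rfl, rfl⟩

theorem swap (v : List (GPLetter M)) {x y : GPLetter M} (h : G.Adj x.1 y.1) :
    ShuffleEquiv G M (x :: y :: v) (y :: x :: v) :=
  swap_append [] v h

theorem of_eq (h : t = t') : ShuffleEquiv G M t t' := h ▸ .refl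

theorem cons (z : GPLetter M) (h : ShuffleEquiv G M t t') :
    ShuffleEquiv G M (z :: t) (z :: t') := by
  induction h with
  | refl => exact .refl
  | tail _ hstep ih =>
    obtain ⟨u, v, x, y, hadj, rfl, rfl⟩ := hstep
    exact ih.tail ⟨z :: u, v, x, y, hadj, rfl, rfl⟩

end ShuffleEquiv

section CompleteBlock

variable {G : SimpleGraph V} {M : V → Type*} [∀ α, Monoid (M α)] {a : List (GPLetter M)}

theorem CompleteBlock.fst_get_ne (ha : CompleteBlock G M a)
    (j i : Fin a.length) (hij : i < j) : (a.get i).1 ≠ (a.get j).1 := by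
  induction j using WellFoundedLT.induction generalizing i with
  | _ j ih =>
    intro heq
    obtain ⟨k, hik, hkj, hna⟩ := ha.1.2 i j hij heq
    refine ih k hkj i hik (not_not.mp fun hne => hna ?_)
    exact ha.2 _ (a.get_mem i) _ (a.get_mem k) hne

theorem CompleteBlock.pairwise_adj (ha : CompleteBlock G M a) :
    a.Pairwise fun x y => G.Adj x.1 y.1 :=
  List.pairwise_iff_get.mpr fun i j hij =>
    ha.2 _ (a.get_mem i) _ (a.get_mem j) (ha.fst_get_ne j i hij)

end CompleteBlock

namespace GraphProduct

open scoped Classical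

variable {G : SimpleGraph V} {M : V → Type*} [∀ α, Monoid (M α)]

variable (G) in
def of (x : GPLetter M) : GraphProduct G M := (gpCon G M).mk' (FreeMonoid.of x)

theorem mk'_eq_of_gpRel {w₁ w₂ : FreeMonoid (GPLetter M)} (h : gpRel G M w₁ w₂) :
    (gpCon G M).mk' w₁ = (gpCon G M).mk' w₂ :=
  (Con.eq _).mpr (ConGen.Rel.of _ _ h)

@[simp]
theorem of_one (α : V) : of G (⟨α, 1⟩ : GPLetter M) = 1 :=
  (mk'_eq_of_gpRel (Or.inl ⟨α, rfl, rfl⟩)).trans (map_one _)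

theorem of_mul_of (α : V) (x y : M α) :
    of G ⟨α, x⟩ * of G ⟨α, y⟩ = of G (⟨α, x * y⟩ : GPLetter M) :=
  (map_mul _ _ _).symm.trans (mk'_eq_of_gpRel (Or.inr (Or.inl ⟨α, x, y, rfl, rfl⟩)))

theorem commute_of_of {x y : GPLetter M} (h : G.Adj x.1 y.1) : Commute (of G x) (of G y) :=
  (map_mul _ _ _).symm.trans <|
    (mk'_eq_of_gpRel (Or.inr (Or.inr ⟨x.1, y.1, x.2, y.2, h, rfl, rfl⟩))).trans (map_mul _ _ _)

@[simp]
theorem gpMk_nil : gpMk G M [] = 1 := map_one _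

@[simp]
theorem gpMk_cons (x : GPLetter M) (l : List (GPLetter M)) :
    gpMk G M (x :: l) = of G x * gpMk G M l :=
  map_mul (gpCon G M).mk' (FreeMonoid.of x) (FreeMonoid.ofList l)

theorem gpMk_singleton (x : GPLetter M) : gpMk G M [x] = of G x := by simp

theorem commute_of_gpMk {x : GPLetter M} {l : List (GPLetter M)}
    (h : ∀ y ∈ l, G.Adj x.1 y.1) : Commute (of G x) (gpMk G M l) := by
  induction l with
  | nil => simp
  | cons y l ih =>
    rw [gpMk_cons]
    exact (commute_of_of (h y (by simp))).mul_right (ih fun z hz => h z (by simp [hz]))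

theorem gpMk_mem_plIdeal_of_mem {l : List (GPLetter M)}
    (hl : l.Pairwise fun x y => G.Adj x.1 y.1) {x : GPLetter M} (hx : x ∈ l) :
    gpMk G M l ∈ plIdeal (of G x) := by
  induction hl with
  | nil => cases hx
  | @cons y l hy _ ih =>
    rw [gpMk_cons]
    rcases List.mem_cons.mp hx with rfl | hx
    · exact ⟨gpMk G M l, (commute_of_gpMk hy).eq.symm⟩
    · exact mul_mem_plIdeal _ (ih hx)

-- Words are stored reversed, the head being the last letter, so that right multiplication by
-- a letter acts at the head.
variable (G) in
noncomputable def eval : List (GPLetter M) → GraphProduct G M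
  | [] => 1
  | z :: t => eval t * of G z

variable (G) in
noncomputable def insertLetter : List (GPLetter M) → GPLetter M → List (GPLetter M)
  | [], x => [x]
  | ⟨β, z⟩ :: t, x =>
    if h : β = x.1 then
      if (h ▸ z) * x.2 = 1 then t else ⟨x.1, (h ▸ z) * x.2⟩ :: t
    else if G.Adj x.1 β then ⟨β, z⟩ :: insertLetter t x
    else x :: ⟨β, z⟩ :: t

variable (G) in
noncomputable def mulLetter (t : List (GPLetter M)) (x : GPLetter M) : List (GPLetter M) :=
  if x.2 = 1 then t else insertLetter G t x

variable (G) in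
noncomputable def normalForm (w : FreeMonoid (GPLetter M)) : List (GPLetter M) :=
  w.toList.foldl (mulLetter G) []

variable (G) in
/-- No letter of vertex `α` can be brought to the head by shuffles. -/
def Blocked (α : V) : List (GPLetter M) → Prop
  | [] => True
  | z :: t => z.1 ≠ α ∧ (¬ G.Adj α z.1 ∨ Blocked α t)

variable (G) in
def Reduced : List (GPLetter M) → Prop
  | [] => True
  | z :: t => z.2 ≠ 1 ∧ Blocked G z.1 t ∧ Reduced t

@[simp]
theorem eval_nil : eval G ([] : List (GPLetter M)) = 1 := rfl

@[simp]
theorem eval_cons (z : GPLetter M) (t : List (GPLetter M)) :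
    eval G (z :: t) = eval G t * of G z := rfl

@[simp]
theorem insertLetter_nil (x : GPLetter M) : insertLetter G [] x = [x] := rfl

@[simp]
theorem insertLetter_cons_same (t : List (GPLetter M)) (α : V) (z x : M α) :
    insertLetter G (⟨α, z⟩ :: t) ⟨α, x⟩ =
      if z * x = 1 then t else ⟨α, z * x⟩ :: t := by
  simp [insertLetter]

theorem insertLetter_cons_of_adj (t : List (GPLetter M)) (z x : GPLetter M)
    (h : G.Adj x.1 z.1) : insertLetter G (z :: t) x = z :: insertLetter G t x := by
  obtain ⟨β, z⟩ := z
  simp [insertLetter, h, (G.ne_of_adj h).symm]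

theorem insertLetter_cons_of_not_adj (t : List (GPLetter M)) (z x : GPLetter M)
    (hne : z.1 ≠ x.1) (h : ¬ G.Adj x.1 z.1) : insertLetter G (z :: t) x = x :: z :: t := by
  obtain ⟨β, z⟩ := z
  simp [insertLetter, hne, h]

theorem mulLetter_of_eq_one (t : List (GPLetter M)) {x : GPLetter M} (h : x.2 = 1) :
    mulLetter G t x = t := if_pos h

theorem mulLetter_of_ne_one (t : List (GPLetter M)) {x : GPLetter M} (h : x.2 ≠ 1) :
    mulLetter G t x = insertLetter G t x := if_neg h

theorem mulLetter_cons_same (t : List (GPLetter M)) (α : V) {z : M α} (hz : z ≠ 1) (x : M α) :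
    mulLetter G (⟨α, z⟩ :: t) ⟨α, x⟩ = if z * x = 1 then t else ⟨α, z * x⟩ :: t := by
  by_cases hx : x = 1
  · simp [mulLetter, hx, hz]
  · simp [mulLetter, hx]

theorem mulLetter_cons_of_adj (t : List (GPLetter M)) (z x : GPLetter M)
    (h : G.Adj x.1 z.1) : mulLetter G (z :: t) x = z :: mulLetter G t x := by
  unfold mulLetter
  split_ifs
  · rfl
  · exact insertLetter_cons_of_adj t z x h

theorem eval_insertLetter (t : List (GPLetter M)) (x : GPLetter M) :
    eval G (insertLetter G t x) = eval G t * of G x := by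
  induction t with
  | nil => simp
  | cons z t ih =>
    obtain ⟨β, z⟩ := z
    obtain ⟨α, x⟩ := x
    rcases eq_or_ne β α with rfl | hne
    · rw [insertLetter_cons_same]
      split_ifs with h <;> simp [mul_assoc, of_mul_of, h]
    · by_cases hadj : G.Adj α β
      · rw [insertLetter_cons_of_adj t ⟨β, z⟩ ⟨α, x⟩ hadj, eval_cons, ih, eval_cons,
          mul_assoc, mul_assoc, (commute_of_of (x := ⟨α, x⟩) (y := ⟨β, z⟩) hadj).eq]
      · rw [insertLetter_cons_of_not_adj t ⟨β, z⟩ ⟨α, x⟩ hne hadj]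
        rfl

theorem eval_mulLetter (t : List (GPLetter M)) (x : GPLetter M) :
    eval G (mulLetter G t x) = eval G t * of G x := by
  by_cases h : x.2 = 1
  · obtain ⟨α, x⟩ := x
    simp_all [mulLetter_of_eq_one]
  · rw [mulLetter_of_ne_one t h, eval_insertLetter]

theorem eval_foldl_mulLetter (t l : List (GPLetter M)) :
    eval G (l.foldl (mulLetter G) t) = eval G t * gpMk G M l := by
  induction l generalizing t with
  | nil => simp
  | cons x l ih => rw [List.foldl_cons, ih, eval_mulLetter, gpMk_cons, mul_assoc]

theorem eval_normalForm (w : FreeMonoid (GPLetter M)) :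
    eval G (normalForm G w) = (gpCon G M).mk' w := by
  rw [normalForm, eval_foldl_mulLetter, eval_nil, one_mul]
  rfl

theorem normalForm_mul_of (w : FreeMonoid (GPLetter M)) (x : GPLetter M) :
    normalForm G (w * FreeMonoid.of x) = mulLetter G (normalForm G w) x := by
  simp [normalForm]

theorem blocked_insertLetter {α β : V} (hadj : G.Adj α β) (x : M α) {t : List (GPLetter M)}
    (hb : Blocked G β t) : Blocked G β (insertLetter G t ⟨α, x⟩) := by
  induction t with
  | nil => exact ⟨G.ne_of_adj hadj, Or.inr trivial⟩
  | cons z t ih =>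
    obtain ⟨γ, z⟩ := z
    obtain ⟨hne, hrest⟩ := hb
    rcases eq_or_ne γ α with rfl | hγ
    · have hbt : Blocked G β t := hrest.resolve_left (not_not.mpr hadj.symm)
      rw [insertLetter_cons_same]
      split_ifs
      · exact hbt
      · exact ⟨G.ne_of_adj hadj, Or.inr hbt⟩
    · by_cases hαγ : G.Adj α γ
      · rw [insertLetter_cons_of_adj t ⟨γ, z⟩ ⟨α, x⟩ hαγ]
        exact ⟨hne, hrest.imp_right ih⟩
      · rw [insertLetter_cons_of_not_adj t ⟨γ, z⟩ ⟨α, x⟩ hγ hαγ]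
        exact ⟨G.ne_of_adj hadj, Or.inr ⟨hne, hrest⟩⟩

theorem reduced_insertLetter {α : V} {x : M α} (hx : x ≠ 1) {t : List (GPLetter M)}
    (ht : Reduced G t) : Reduced G (insertLetter G t ⟨α, x⟩) := by
  induction t with
  | nil => exact ⟨hx, trivial, trivial⟩
  | cons z t ih =>
    obtain ⟨γ, z⟩ := z
    obtain ⟨hz, hblocked, ht⟩ := ht
    rcases eq_or_ne γ α with rfl | hγ
    · rw [insertLetter_cons_same]
      split_ifs with hzx
      · exact ht
      · exact ⟨hzx, hblocked, ht⟩
    · by_cases hαγ : G.Adj α γ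
      · rw [insertLetter_cons_of_adj t ⟨γ, z⟩ ⟨α, x⟩ hαγ]
        exact ⟨hz, blocked_insertLetter hαγ x hblocked, ih ht⟩
      · rw [insertLetter_cons_of_not_adj t ⟨γ, z⟩ ⟨α, x⟩ hγ hαγ]
        exact ⟨hx, ⟨hγ, Or.inl hαγ⟩, hz, hblocked, ht⟩

theorem reduced_foldl_mulLetter {t : List (GPLetter M)} (ht : Reduced G t)
    (l : List (GPLetter M)) : Reduced G (l.foldl (mulLetter G) t) := by
  induction l generalizing t with
  | nil => exact ht
  | cons x l ih =>
    refine ih ?_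
    by_cases hx : x.2 = 1
    · rwa [mulLetter_of_eq_one t hx]
    · rw [mulLetter_of_ne_one t hx]
      exact reduced_insertLetter hx ht

theorem insertLetter_of_blocked {α : V} {t : List (GPLetter M)} (hb : Blocked G α t)
    (x : M α) :
    ShuffleEquiv G M (insertLetter G t ⟨α, x⟩) (⟨α, x⟩ :: t) := by
  induction t with
  | nil => exact .refl
  | cons z t ih =>
    obtain ⟨hne, hrest⟩ := hb
    by_cases hadj : G.Adj α z.1
    · rw [insertLetter_cons_of_adj t z ⟨α, x⟩ hadj]
      exact ((ih (hrest.resolve_left (not_not.mpr hadj))).cons z).trans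
        (ShuffleEquiv.swap (x := ⟨α, x⟩) t hadj).symm
    · rw [insertLetter_cons_of_not_adj t z ⟨α, x⟩ hne hadj]
      exact .refl

-- Up to exchanging `a` and `b`, the hypotheses on `b` cover every case.
theorem insertLetter_swap_head_of_ne {a b x : GPLetter M} (v : List (GPLetter M))
    (hab : G.Adj a.1 b.1) (hb : b.1 ≠ x.1) (h : G.Adj x.1 b.1 ∨ ¬ G.Adj x.1 a.1) :
    ShuffleEquiv G M (insertLetter G (a :: b :: v) x) (insertLetter G (b :: a :: v) x) := by
  by_cases ha : a.1 = x.1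
  · obtain ⟨α, z⟩ := a
    obtain ⟨β, y⟩ := x
    obtain rfl : α = β := ha
    simp only [insertLetter_cons_same, insertLetter_cons_of_adj _ b ⟨α, y⟩ hab]
    split_ifs
    · exact .refl
    · exact .swap v hab
  by_cases hxa : G.Adj x.1 a.1
  · have hxb := h.resolve_right (not_not.mpr hxa)
    simp only [insertLetter_cons_of_adj _ a x hxa, insertLetter_cons_of_adj _ b x hxb]
    exact .swap _ hab
  rw [insertLetter_cons_of_not_adj _ a x ha hxa]
  by_cases hxb : G.Adj x.1 b.1
  · rw [insertLetter_cons_of_adj _ b x hxb, insertLetter_cons_of_not_adj _ a x ha hxa]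
    exact ((ShuffleEquiv.swap v hab).cons x).trans (ShuffleEquiv.swap _ hxb)
  · rw [insertLetter_cons_of_not_adj _ b x hb hxb]
    exact (ShuffleEquiv.swap v hab).cons x

theorem insertLetter_swap_head {a b : GPLetter M} (v : List (GPLetter M))
    (hab : G.Adj a.1 b.1) (x : GPLetter M) :
    ShuffleEquiv G M (insertLetter G (a :: b :: v) x) (insertLetter G (b :: a :: v) x) := by
  by_cases h : b.1 ≠ x.1 ∧ (G.Adj x.1 b.1 ∨ ¬ G.Adj x.1 a.1)
  · exact insertLetter_swap_head_of_ne v hab h.1 h.2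
  have hxa : G.Adj x.1 a.1 := by
    rcases not_and_or.mp h with hbx | h
    · exact not_not.mp hbx ▸ hab.symm
    · exact not_not.mp (not_or.mp h).2
  exact (insertLetter_swap_head_of_ne v hab.symm (G.ne_of_adj hxa).symm (Or.inl hxa)).symm

theorem insertLetter_swap (u v : List (GPLetter M)) {a b : GPLetter M} (hab : G.Adj a.1 b.1)
    (x : GPLetter M) :
    ShuffleEquiv G M (insertLetter G (u ++ a :: b :: v) x)
      (insertLetter G (u ++ b :: a :: v) x) := by
  induction u with
  | nil => exact insertLetter_swap_head v hab x
  | cons c u ih =>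
    obtain ⟨γ, c⟩ := c
    obtain ⟨α, x⟩ := x
    rcases eq_or_ne γ α with rfl | hne
    · simp only [List.cons_append, insertLetter_cons_same]
      split_ifs
      · exact .swap_append u v hab
      · exact .swap_append (_ :: u) v hab
    by_cases hadj : G.Adj α γ
    · simp only [List.cons_append, insertLetter_cons_of_adj _ ⟨γ, c⟩ ⟨α, x⟩ hadj]
      exact ih.cons _
    · simp only [List.cons_append, insertLetter_cons_of_not_adj _ ⟨γ, c⟩ ⟨α, x⟩ hne hadj]
      exact .swap_append (⟨α, x⟩ :: ⟨γ, c⟩ :: u) v hab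

theorem foldl_mulLetter_shuffleEquiv {t t' : List (GPLetter M)} (h : ShuffleEquiv G M t t')
    (l : List (GPLetter M)) :
    ShuffleEquiv G M (l.foldl (mulLetter G) t) (l.foldl (mulLetter G) t') := by
  induction l generalizing t t' with
  | nil => exact h
  | cons x l ih =>
    refine ih ?_
    by_cases hx : x.2 = 1
    · rwa [mulLetter_of_eq_one t hx, mulLetter_of_eq_one t' hx]
    rw [mulLetter_of_ne_one t hx, mulLetter_of_ne_one t' hx]
    induction h with
    | refl => exact .refl
    | tail _ hstep ih' =>
      obtain ⟨u, v, a, b, hab, rfl, rfl⟩ := hstep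
      exact ih'.trans (insertLetter_swap u v hab x)

theorem insertLetter_insertLetter_same {α : V} (x : M α) {y : M α} (hy : y ≠ 1)
    {t : List (GPLetter M)} (ht : Reduced G t) :
    ShuffleEquiv G M (insertLetter G (insertLetter G t ⟨α, x⟩) ⟨α, y⟩)
      (mulLetter G t ⟨α, x * y⟩) := by
  induction t with
  | nil =>
    simp only [insertLetter_nil, insertLetter_cons_same, mulLetter]
    split_ifs <;> exact .refl
  | cons z t ih =>
    obtain ⟨β, z⟩ := z
    obtain ⟨hz, hblocked, ht⟩ := ht
    rcases eq_or_ne β α with rfl | hne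
    · rw [insertLetter_cons_same, mulLetter_cons_same t β hz]
      by_cases hzx : z * x = 1
      · have hzxy : z * (x * y) = y := by rw [← mul_assoc, hzx, one_mul]
        rw [if_pos hzx, hzxy, if_neg hy]
        exact insertLetter_of_blocked hblocked y
      · rw [if_neg hzx, insertLetter_cons_same, mul_assoc]
        exact .refl
    by_cases hadj : G.Adj α β
    · rw [insertLetter_cons_of_adj t ⟨β, z⟩ ⟨α, x⟩ hadj,
        insertLetter_cons_of_adj _ ⟨β, z⟩ ⟨α, y⟩ hadj,
        mulLetter_cons_of_adj t ⟨β, z⟩ ⟨α, x * y⟩ hadj]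
      exact (ih ht).cons _
    · rw [insertLetter_cons_of_not_adj t ⟨β, z⟩ ⟨α, x⟩ hne hadj, insertLetter_cons_same]
      simp only [mulLetter, insertLetter_cons_of_not_adj t ⟨β, z⟩ ⟨α, x * y⟩ hne hadj]
      split_ifs <;> exact .refl

theorem mulLetter_mulLetter_same {α : V} (x y : M α) {t : List (GPLetter M)}
    (ht : Reduced G t) :
    ShuffleEquiv G M (mulLetter G (mulLetter G t ⟨α, x⟩) ⟨α, y⟩)
      (mulLetter G t ⟨α, x * y⟩) := by
  by_cases hy : y = 1
  · subst hy
    rw [mulLetter_of_eq_one _ (x := ⟨α, 1⟩) rfl, mul_one]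
    exact .refl
  by_cases hx : x = 1
  · subst hx
    rw [mulLetter_of_eq_one t (x := ⟨α, 1⟩) rfl, one_mul]
    exact .refl
  rw [mulLetter_of_ne_one _ (x := ⟨α, y⟩) hy, mulLetter_of_ne_one t (x := ⟨α, x⟩) hx]
  exact insertLetter_insertLetter_same x hy ht

theorem insertLetter_comm_cons_same {α β : V} (hadj : G.Adj α β) (w x : M α) (y : M β)
    (t : List (GPLetter M)) :
    insertLetter G (insertLetter G (⟨α, w⟩ :: t) ⟨α, x⟩) ⟨β, y⟩
      = insertLetter G (insertLetter G (⟨α, w⟩ :: t) ⟨β, y⟩) ⟨α, x⟩ := by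
  rw [insertLetter_cons_of_adj t ⟨α, w⟩ ⟨β, y⟩ hadj.symm, insertLetter_cons_same,
    insertLetter_cons_same]
  split_ifs
  · rfl
  · exact insertLetter_cons_of_adj t _ ⟨β, y⟩ hadj.symm

theorem insertLetter_comm_cons_of_not_adj {p q z : GPLetter M} (hpq : G.Adj p.1 q.1)
    (hpz : G.Adj p.1 z.1) (hzq : z.1 ≠ q.1) (hqz : ¬ G.Adj q.1 z.1) (t : List (GPLetter M)) :
    insertLetter G (insertLetter G (z :: t) p) q =
      insertLetter G (insertLetter G (z :: t) q) p := by
  simp only [insertLetter_cons_of_adj _ z p hpz, insertLetter_cons_of_not_adj _ z q hzq hqz,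
    insertLetter_cons_of_adj _ q p hpq]

theorem insertLetter_comm {p q : GPLetter M} (hpq : G.Adj p.1 q.1) (t : List (GPLetter M)) :
    ShuffleEquiv G M (insertLetter G (insertLetter G t p) q)
      (insertLetter G (insertLetter G t q) p) := by
  induction t with
  | nil =>
    simp only [insertLetter_nil, insertLetter_cons_of_adj [] p q hpq.symm,
      insertLetter_cons_of_adj [] q p hpq]
    exact .swap [] hpq
  | cons z t ih =>
    obtain ⟨α, x⟩ := p
    obtain ⟨β, y⟩ := q
    obtain ⟨γ, w⟩ := z
    rcases eq_or_ne γ α with rfl | hα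
    · exact .of_eq (insertLetter_comm_cons_same hpq w x y t)
    rcases eq_or_ne γ β with rfl | hβ
    · exact .of_eq (insertLetter_comm_cons_same hpq.symm w y x t).symm
    by_cases hαγ : G.Adj α γ <;> by_cases hβγ : G.Adj β γ
    · simp only [insertLetter_cons_of_adj _ ⟨γ, w⟩ ⟨α, x⟩ hαγ,
        insertLetter_cons_of_adj _ ⟨γ, w⟩ ⟨β, y⟩ hβγ]
      exact ih.cons _
    · exact .of_eq (insertLetter_comm_cons_of_not_adj hpq hαγ hβ hβγ t)
    · exact .of_eq (insertLetter_comm_cons_of_not_adj hpq.symm hβγ hα hαγ t).symm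
    · simp only [insertLetter_cons_of_not_adj _ ⟨γ, w⟩ ⟨α, x⟩ hα hαγ,
        insertLetter_cons_of_not_adj _ ⟨γ, w⟩ ⟨β, y⟩ hβ hβγ,
        insertLetter_cons_of_adj _ ⟨α, x⟩ ⟨β, y⟩ hpq.symm,
        insertLetter_cons_of_adj _ ⟨β, y⟩ ⟨α, x⟩ hpq]
      exact .swap _ hpq

theorem mulLetter_comm {p q : GPLetter M} (hpq : G.Adj p.1 q.1) (t : List (GPLetter M)) :
    ShuffleEquiv G M (mulLetter G (mulLetter G t p) q) (mulLetter G (mulLetter G t q) p) := by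
  by_cases hp : p.2 = 1
  · simp only [mulLetter_of_eq_one _ hp]
    exact .refl
  by_cases hq : q.2 = 1
  · simp only [mulLetter_of_eq_one _ hq]
    exact .refl
  simp only [mulLetter_of_ne_one _ hp, mulLetter_of_ne_one _ hq]
  exact insertLetter_comm hpq t

variable (G M) in
def normalFormCon : Con (FreeMonoid (GPLetter M)) where
  r w w' := ∀ t, Reduced G t →
    ShuffleEquiv G M (w.toList.foldl (mulLetter G) t) (w'.toList.foldl (mulLetter G) t)
  iseqv := ⟨fun _ _ _ => .refl, fun h t ht => (h t ht).symm,
    fun h₁ h₂ t ht => (h₁ t ht).trans (h₂ t ht)⟩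
  mul' := by
    intro a b c d h₁ h₂ t ht
    simp only [FreeMonoid.toList_mul, List.foldl_append]
    exact (h₂ _ (reduced_foldl_mulLetter ht _)).trans (foldl_mulLetter_shuffleEquiv (h₁ t ht) _)

theorem gpCon_le_normalFormCon : gpCon G M ≤ normalFormCon G M := by
  refine Con.conGen_le.mpr ?_
  rintro _ _ (⟨α, rfl, rfl⟩ | ⟨α, x, y, rfl, rfl⟩ | ⟨α, β, x, y, hadj, rfl, rfl⟩)
    t ht
  · exact .of_eq (mulLetter_of_eq_one t (x := ⟨α, 1⟩) rfl)
  · exact mulLetter_mulLetter_same x y ht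
  · exact mulLetter_comm hadj t

theorem normalForm_shuffleEquiv_of_mk'_eq {w w' : FreeMonoid (GPLetter M)}
    (h : (gpCon G M).mk' w = (gpCon G M).mk' w') :
    ShuffleEquiv G M (normalForm G w) (normalForm G w') :=
  Con.le_def.mp gpCon_le_normalFormCon ((Con.eq _).mp h) [] trivial

variable (G) in
/-- A letter of vertex `b.1` that is a left multiple of `b.2` can be brought to the head
by shuffles. -/
def HasRightFactor (b : GPLetter M) : List (GPLetter M) → Prop
  | [] => False
  | z :: t => (∃ h : z.1 = b.1, ∃ c : M b.1, h ▸ z.2 = c * b.2) ∨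
      (G.Adj b.1 z.1 ∧ HasRightFactor b t)

theorem HasRightFactor.swap {b : GPLetter M} (u v : List (GPLetter M)) {x y : GPLetter M}
    (hxy : G.Adj x.1 y.1) (h : HasRightFactor G b (u ++ x :: y :: v)) :
    HasRightFactor G b (u ++ y :: x :: v) := by
  induction u with
  | nil =>
    rcases h with ⟨hx, hc⟩ | ⟨hbx, ⟨hy, hc⟩ | ⟨hby, h⟩⟩
    · exact .inr ⟨hx ▸ hxy, .inl ⟨hx, hc⟩⟩
    · exact .inl ⟨hy, hc⟩
    · exact .inr ⟨hby, .inr ⟨hbx, h⟩⟩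
  | cons z u ih => exact h.imp_right (And.imp_right ih)

theorem HasRightFactor.of_shuffleEquiv {b : GPLetter M} {t t' : List (GPLetter M)}
    (h : ShuffleEquiv G M t t') (hb : HasRightFactor G b t) : HasRightFactor G b t' := by
  induction h with
  | refl => exact hb
  | tail _ hstep ih =>
    obtain ⟨u, v, x, y, hxy, rfl, rfl⟩ := hstep
    exact ih.swap u v hxy

theorem hasRightFactor_insertLetter {b : GPLetter M} (hb : ¬ LeftInvertibleLetter M b)
    (t : List (GPLetter M)) : HasRightFactor G b (insertLetter G t b) := by
  obtain ⟨β, b⟩ := b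
  induction t with
  | nil => exact .inl ⟨rfl, 1, (one_mul b).symm⟩
  | cons z t ih =>
    obtain ⟨γ, z⟩ := z
    rcases eq_or_ne γ β with rfl | hne
    · rw [insertLetter_cons_same, if_neg fun h => hb ⟨z, h⟩]
      exact .inl ⟨rfl, z, rfl⟩
    by_cases hadj : G.Adj β γ
    · rw [insertLetter_cons_of_adj t ⟨γ, z⟩ ⟨β, b⟩ hadj]
      exact .inr ⟨hadj, ih⟩
    · rw [insertLetter_cons_of_not_adj t ⟨γ, z⟩ ⟨β, b⟩ hne hadj]
      exact .inl ⟨rfl, 1, (one_mul b).symm⟩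

theorem hasRightFactor_normalForm {b : GPLetter M} (hb : ¬ LeftInvertibleLetter M b)
    {w : FreeMonoid (GPLetter M)} (hw : (gpCon G M).mk' w ∈ plIdeal (of G b)) :
    HasRightFactor G b (normalForm G w) := by
  obtain ⟨s, hs⟩ := hw
  obtain ⟨u, rfl⟩ := (gpCon G M).mk'_surjective s
  have hu := normalForm_shuffleEquiv_of_mk'_eq ((map_mul _ u (FreeMonoid.of b)).trans hs)
  have hb1 : b.2 ≠ 1 := fun h => hb ⟨1, by rw [h, one_mul]⟩
  rw [normalForm_mul_of, mulLetter_of_ne_one _ hb1] at hu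
  exact (hasRightFactor_insertLetter hb _).of_shuffleEquiv hu

theorem exists_eval_eq_of_hasRightFactor {β : V} {b : M β} {N : List (GPLetter M)}
    (h : HasRightFactor G ⟨β, b⟩ N) :
    ∃ (N' : List (GPLetter M)) (c : M β), eval G N = eval G N' * of G ⟨β, c * b⟩ ∧
      ∀ y : GPLetter M, y.1 ≠ β → HasRightFactor G y N → HasRightFactor G y N' := by
  induction N with
  | nil => exact h.elim
  | cons z t ih =>
    rcases h with ⟨hz, c, hc⟩ | ⟨hadj, h⟩
    · obtain ⟨γ, z⟩ := z
      obtain rfl : γ = β := hz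
      refine ⟨t, c, by rw [eval_cons, ← hc], fun y hy hyN => ?_⟩
      exact hyN.resolve_left (fun ⟨h, _⟩ => hy h.symm) |>.2
    · obtain ⟨N', c, hN, hN'⟩ := ih h
      refine ⟨z :: N', c, ?_, fun y hy hyN => hyN.imp_right (And.imp_right (hN' y hy))⟩
      rw [eval_cons, eval_cons, hN, mul_assoc, mul_assoc,
        (commute_of_of (x := ⟨β, c * b⟩) hadj).eq]

theorem eval_mem_plIdeal_gpMk {l : List (GPLetter M)}
    (hl : l.Pairwise fun x y => G.Adj x.1 y.1) {N : List (GPLetter M)}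
    (hN : ∀ x ∈ l, HasRightFactor G x N) :
    eval G N ∈ plIdeal (gpMk G M l) := by
  induction hl generalizing N with
  | nil => exact ⟨eval G N, mul_one _⟩
  | @cons b l hb _ ih =>
    obtain ⟨β, b⟩ := b
    obtain ⟨N', c, hN_eq, hN'⟩ := exists_eval_eq_of_hasRightFactor (hN _ List.mem_cons_self)
    obtain ⟨s, hs⟩ := ih fun x hx =>
      hN' x (G.ne_of_adj (hb x hx)).symm (hN x (List.mem_cons_of_mem _ hx))
    refine ⟨s * of G ⟨β, c⟩, ?_⟩
    calc s * of G ⟨β, c⟩ * gpMk G M (⟨β, b⟩ :: l)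
        = s * (of G ⟨β, c⟩ * gpMk G M l) * of G ⟨β, b⟩ := by
          rw [gpMk_cons, (commute_of_gpMk (x := ⟨β, b⟩) hb).eq]
          simp only [mul_assoc]
      _ = eval G N := by
          rw [(commute_of_gpMk (x := ⟨β, c⟩) hb).eq, hN_eq, ← hs, ← of_mul_of]
          simp only [mul_assoc]

end GraphProduct

/-- the principal left ideal of a complete block with no left invertible
letters is the intersection of the principal left ideals of its letters. -/
theorem stmt5 {V : Type*} (G : SimpleGraph V) (M : V → Type*) [∀ α, Monoid (M α)]
    (a : List (GPLetter M)) (ha : CompleteBlock G M a)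
    (hinv : ∀ x ∈ a, ¬ LeftInvertibleLetter M x) :
    plIdeal (gpMk G M a) = ⋂ i : Fin a.length, plIdeal (gpMk G M [a.get i]) := by
  open GraphProduct in
  refine Set.Subset.antisymm (fun g hg => Set.mem_iInter.mpr fun i => ?_) fun g hg => ?_
  · rw [gpMk_singleton]
    exact plIdeal_subset_of_mem_s5 (gpMk_mem_plIdeal_of_mem ha.pairwise_adj (a.get_mem i)) hg
  · obtain ⟨w, rfl⟩ := (gpCon G M).mk'_surjective g
    rw [← eval_normalForm w]
    refine eval_mem_plIdeal_gpMk ha.pairwise_adj fun x hx =>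
      hasRightFactor_normalForm (hinv x hx) ?_
    obtain ⟨i, rfl⟩ := List.mem_iff_get.mp hx
    simpa only [gpMk_singleton] using Set.mem_iInter.mp hg i
end

section
/- A free product (monoid coproduct) of a family {M_i : i ∈ I} of monoids satisfies the ascending chain condition on principal left ideals if and only if each M_i satisfies it; likewise, the restricted direct product of {M_i : i ∈ I} satisfies the ascending chain condition on principal left ideals if and only if each M_i satisfies it. -/
/-! Common definitions for graph products of monoids. -/

variable {V : Type*}

/-!
Every factor is a retract of the free product and of the restricted direct product, and ACCPL
passes to retracts. In the restricted direct product `x ∈ S y` can be tested coordinatewise, and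
along an ascending chain every coordinate outside the finite support of the first term is left
invertible from the start, so the chain stabilises as soon as finitely many coordinate chains do.

For the free product, ACCPL says that strict inclusion of principal left ideals is well founded.
Write elements as reduced words and call the suffix starting at the first letter that is not left
invertible in its factor the critical suffix. The prefix in front of it is left invertible, so
the critical suffix alone determines the principal left ideal. Left multiplication by a letter
only changes the first letter of a word, so the critical suffix of `s * b` is longer than that of
`b`, or equal to it, or has the same tail and its first letter multiplied on the left inside the
same factor. Hence if `S (s * b) ⊊ S b`, either the critical suffix of `b` is shorter, or it has
the same length and tail and its first letter generates a strictly larger principal left ideal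
in the same factor: a lexicographic combination of well-founded relations.
-/

open Filter Monoid

section PrincipalLeftIdeal

variable {S N : Type*} [Monoid S] [Monoid N]

theorem mem_plIdeal {a x : S} : x ∈ plIdeal a ↔ ∃ s, s * a = x := Iff.rfl

theorem self_mem_plIdeal (a : S) : a ∈ plIdeal a := ⟨1, one_mul a⟩

theorem plIdeal_subset_iff {a b : S} : plIdeal a ⊆ plIdeal b ↔ a ∈ plIdeal b := by
  refine ⟨fun h => h (self_mem_plIdeal a), fun h x hx => ?_⟩
  obtain ⟨s, rfl⟩ := mem_plIdeal.1 h
  obtain ⟨t, rfl⟩ := mem_plIdeal.1 hx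
  exact ⟨t * s, mul_assoc t s b⟩

theorem mem_plIdeal_trans {a b c : S} (hab : a ∈ plIdeal b) (hbc : b ∈ plIdeal c) :
    a ∈ plIdeal c :=
  plIdeal_subset_iff.2 hbc hab

theorem plIdeal_mul_subset (s a : S) : plIdeal (s * a) ⊆ plIdeal a :=
  plIdeal_subset_iff.2 ⟨s, rfl⟩

theorem plIdeal_mul_of_one_mem {p : S} (hp : 1 ∈ plIdeal p) (a : S) :
    plIdeal (p * a) = plIdeal a := by
  obtain ⟨q, hq⟩ := mem_plIdeal.1 hp
  exact (plIdeal_mul_subset p a).antisymm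
    (plIdeal_subset_iff.2 (mem_plIdeal.2 ⟨q, by rw [← mul_assoc, hq, one_mul]⟩))

theorem mem_plIdeal_of_one_mem {a : S} (h : 1 ∈ plIdeal a) (x : S) : x ∈ plIdeal a :=
  plIdeal_subset_iff.2 h ⟨x, mul_one x⟩

theorem map_mem_plIdeal (f : S →* N) {a b : S} (h : a ∈ plIdeal b) : f a ∈ plIdeal (f b) := by
  obtain ⟨s, rfl⟩ := mem_plIdeal.1 h
  exact ⟨f s, (map_mul f s b).symm⟩

theorem mul_mem_plIdeal_mul_right {a b : S} (h : a ∈ plIdeal b) (c : S) :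
    a * c ∈ plIdeal (b * c) := by
  obtain ⟨s, rfl⟩ := mem_plIdeal.1 h
  exact ⟨s, (mul_assoc s b c).symm⟩

end PrincipalLeftIdeal

section ACCPL

variable {S N : Type*} [Monoid S] [Monoid N]

theorem accpl_iff_wellFounded :
    ACCPL S ↔ WellFounded fun a b : S => plIdeal b ⊂ plIdeal a := by
  constructor
  · refine fun h => ⟨fun a => by_contra fun ha => ?_⟩
    obtain ⟨f, -, hf⟩ := not_acc_iff_exists_descending_chain.1 ha
    obtain ⟨n, hn⟩ := h f fun n => (hf n).le
    exact (hf n).ne (hn 1).symm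
  · intro h a ha
    obtain ⟨_, ⟨n, rfl⟩, hn⟩ := h.has_min (Set.range a) ⟨a 0, 0, rfl⟩
    exact ⟨n, fun k => ((monotone_nat_of_le_succ ha (Nat.le_add_right n k)).eq_of_not_ssubset
      (hn (a (n + k)) ⟨n + k, rfl⟩)).symm⟩

theorem ACCPL.of_leftInverse (f : N →* S) (g : S →* N) (hgf : Function.LeftInverse g f)
    (h : ACCPL S) : ACCPL N := by
  rw [accpl_iff_wellFounded] at h ⊢
  refine Subrelation.wf (fun {a b} hab => ?_) (InvImage.wf f h)
  simp only [Set.ssubset_def, plIdeal_subset_iff] at hab ⊢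
  refine ⟨map_mem_plIdeal f hab.1, fun hfab => hab.2 ?_⟩
  simpa only [hgf _] using map_mem_plIdeal g hfab

theorem ACCPL.exists_eventually_plIdeal_eq (h : ACCPL S) {a : ℕ → S}
    (ha : ∀ n, plIdeal (a n) ⊆ plIdeal (a (n + 1))) :
    ∃ n, ∀ᶠ m in atTop, plIdeal (a m) = plIdeal (a n) := by
  obtain ⟨n, hn⟩ := h a ha
  refine ⟨n, eventually_atTop.2 ⟨n, fun m hm => ?_⟩⟩
  obtain ⟨k, rfl⟩ := Nat.exists_eq_add_of_le hm
  exact hn k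

end ACCPL

section RestrictedDirectProduct

variable {ι : Type*} {M : ι → Type*} [∀ i, Monoid (M i)]

theorem mem_plIdeal_restrictedDirectProduct {x y : restrictedDirectProduct M} :
    x ∈ plIdeal y ↔ ∀ i, (x : ∀ i, M i) i ∈ plIdeal ((y : ∀ i, M i) i) := by
  classical
  refine ⟨fun h i => map_mem_plIdeal ((Pi.evalMonoidHom M i).comp (Submonoid.subtype _)) h,
    fun h => ?_⟩
  choose c hc using h
  -- taking `x i` where `y i = 1` keeps the support of the left factor finite
  let s : ∀ i, M i := fun i => if (y : ∀ i, M i) i = 1 then (x : ∀ i, M i) i else c i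
  have hs : s ∈ restrictedDirectProduct M := by
    refine (x.2.union y.2).subset fun i hi => ?_
    by_contra hxy
    simp only [Set.mem_union, Set.mem_ofPred_eq, not_or, not_not] at hxy
    simp [s, hxy] at hi
  refine ⟨⟨s, hs⟩, Subtype.ext (funext fun i => ?_)⟩
  by_cases hy : (y : ∀ i, M i) i = 1
  · simp [s, hy]
  · simpa [s, hy] using hc i

theorem accpl_restrictedDirectProduct (h : ∀ i, ACCPL (M i)) :
    ACCPL (restrictedDirectProduct M) := by
  intro a ha
  have hmono : ∀ i, Monotone fun n => plIdeal ((a n : ∀ i, M i) i) := fun i =>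
    monotone_nat_of_le_succ fun n => plIdeal_subset_iff.2
      (mem_plIdeal_restrictedDirectProduct.1 (plIdeal_subset_iff.1 (ha n)) i)
  choose n hn using fun i => (h i).exists_eventually_plIdeal_eq fun k => hmono i k.le_succ
  obtain ⟨N, hN⟩ := ((a 0).2.eventually_all.2 fun i _ => hn i).exists_forall_of_atTop
  refine ⟨N, fun k => (monotone_nat_of_le_succ ha (N.le_add_right k)).antisymm' ?_⟩
  refine plIdeal_subset_iff.2 (mem_plIdeal_restrictedDirectProduct.2 fun i => ?_)
  by_cases hi : (a 0 : ∀ i, M i) i = 1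
  · refine mem_plIdeal_of_one_mem ?_ _
    simpa only [← hi] using plIdeal_subset_iff.1 (hmono i N.zero_le)
  · rw [← plIdeal_subset_iff, hN (N + k) (N.le_add_right k) i hi, hN N le_rfl i hi]

theorem accpl_restrictedDirectProduct_iff :
    ACCPL (restrictedDirectProduct M) ↔ ∀ i, ACCPL (M i) := by
  classical
  refine ⟨fun h i => h.of_leftInverse ((MonoidHom.mulSingle M i).codRestrict _ fun x => ?_)
    ((Pi.evalMonoidHom M i).comp (Submonoid.subtype _)) (fun x => by simp),
    accpl_restrictedDirectProduct⟩
  refine (Set.finite_singleton i).subset fun j hj => ?_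
  by_contra hji
  exact hj (Pi.mulSingle_eq_of_ne hji x)

end RestrictedDirectProduct

section HeadRel

variable {ι : Type*} {M : ι → Type*}

def HeadRel (r : ∀ i, M i → M i → Prop) (l l' : List (Σ i, M i)) : Prop :=
  ∃ (i : ι) (x x' : M i) (t : List (Σ i, M i)), l = ⟨i, x⟩ :: t ∧ l' = ⟨i, x'⟩ :: t ∧ r i x x'

variable {r : ∀ i, M i → M i → Prop}

theorem HeadRel.length_eq {l l' : List (Σ i, M i)} (h : HeadRel r l l') :
    l.length = l'.length := by
  obtain ⟨i, x, x', t, rfl, rfl, -⟩ := h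
  rfl

theorem HeadRel.trans (hr : ∀ i (x y z : M i), r i x y → r i y z → r i x z)
    {l₁ l₂ l₃ : List (Σ i, M i)} (h₁₂ : HeadRel r l₁ l₂) (h₂₃ : HeadRel r l₂ l₃) :
    HeadRel r l₁ l₃ := by
  obtain ⟨i, x, x', t, rfl, rfl, hx⟩ := h₁₂
  obtain ⟨j, y, y', s, hs, rfl, hy⟩ := h₂₃
  simp only [List.cons.injEq, Sigma.mk.inj_iff] at hs
  obtain ⟨⟨rfl, hxy⟩, rfl⟩ := hs
  cases hxy
  exact ⟨i, x, y', t, rfl, rfl, hr i _ _ _ hx hy⟩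

theorem wellFounded_headRel (hr : ∀ i, WellFounded (r i)) : WellFounded (HeadRel r) := by
  refine ⟨fun l => ?_⟩
  rcases l with _ | ⟨⟨i, x'⟩, t⟩
  · exact ⟨_, fun l ⟨_, _, _, _, _, h, _⟩ => by cases h⟩
  induction x' using (hr i).induction with
  | _ x' ih =>
    refine ⟨_, fun l ⟨j, x, y, s, hl, hs, hxy⟩ => ?_⟩
    simp only [List.cons.injEq, Sigma.mk.inj_iff] at hs
    obtain ⟨⟨rfl, hy⟩, rfl⟩ := hs
    cases hy
    exact hl ▸ ih x hxy

end HeadRel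

section CoprodI

open CoprodI

variable {ι : Type*} {M : ι → Type*} [∀ i, Monoid (M i)]

open Classical in
noncomputable def critSuffix (l : List (Σ i, M i)) : List (Σ i, M i) :=
  l.dropWhile fun x => 1 ∈ plIdeal x.2

theorem critSuffix_cons_of_one_mem {x : Σ i, M i} (hx : 1 ∈ plIdeal x.2)
    (l : List (Σ i, M i)) : critSuffix (x :: l) = critSuffix l := by
  simp [critSuffix, hx]

theorem critSuffix_cons_of_one_notMem {x : Σ i, M i} (hx : 1 ∉ plIdeal x.2)
    (l : List (Σ i, M i)) : critSuffix (x :: l) = x :: l := by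
  simp [critSuffix, hx]

theorem length_critSuffix_le (l : List (Σ i, M i)) : (critSuffix l).length ≤ l.length :=
  List.length_dropWhile_le _ _

theorem plIdeal_prod_critSuffix (l : List (Σ i, M i)) :
    plIdeal ((critSuffix l).map fun x => of x.2).prod = plIdeal (l.map fun x => of x.2).prod := by
  induction l with
  | nil => rfl
  | cons x l ih =>
    by_cases hx : 1 ∈ plIdeal x.2
    · rw [critSuffix_cons_of_one_mem hx, ih, List.map_cons, List.prod_cons,
        plIdeal_mul_of_one_mem (by simpa using map_mem_plIdeal of hx)]
    · rw [critSuffix_cons_of_one_notMem hx]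

def CritLE (l l' : List (Σ i, M i)) : Prop :=
  l.length < l'.length ∨ Relation.ReflGen (HeadRel fun _ x x' => x' ∈ plIdeal x) l l'

theorem CritLE.refl (l : List (Σ i, M i)) : CritLE l l :=
  Or.inr Relation.ReflGen.refl

theorem CritLE.trans {l₁ l₂ l₃ : List (Σ i, M i)} (h₁₂ : CritLE l₁ l₂) (h₂₃ : CritLE l₂ l₃) :
    CritLE l₁ l₃ := by
  have hlen : ∀ {l l' : List (Σ i, M i)},
      Relation.ReflGen (HeadRel fun _ x x' => x' ∈ plIdeal x) l l' → l.length = l'.length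
    | _, _, .refl => rfl
    | _, _, .single h => h.length_eq
  rcases h₁₂ with h₁₂ | h₁₂ <;> rcases h₂₃ with h₂₃ | h₂₃
  · exact Or.inl (h₁₂.trans h₂₃)
  · exact Or.inl (hlen h₂₃ ▸ h₁₂)
  · exact Or.inl (hlen h₁₂ ▸ h₂₃)
  · refine Or.inr ?_
    rcases h₁₂ with _ | h₁₂
    · exact h₂₃
    rcases h₂₃ with _ | h₂₃
    · exact .single h₁₂
    refine .single (h₁₂.trans (fun _ _ _ _ h h' => ?_) h₂₃)
    exact mem_plIdeal_trans h' h

section DecidableEq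

variable [∀ i, DecidableEq (M i)]

open Classical in
theorem critSuffix_rcons {i : ι} (p : Word.Pair M i) :
    critSuffix (Word.rcons p).toList =
      if 1 ∈ plIdeal p.head then critSuffix p.tail.toList else ⟨i, p.head⟩ :: p.tail.toList := by
  by_cases h1 : p.head = 1
  · rw [if_pos (by rw [h1]; exact self_mem_plIdeal 1), Word.rcons, dif_pos h1]
  · rw [Word.rcons, dif_neg h1]
    split_ifs with hp
    · exact critSuffix_cons_of_one_mem hp _
    · exact critSuffix_cons_of_one_notMem hp _

variable [DecidableEq ι]

theorem critLE_of_smul {i : ι} (m : M i) (w : Word M) :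
    CritLE (critSuffix w.toList) (critSuffix (of m • w).toList) := by
  rw [Word.of_smul_def]
  conv_lhs => rw [← (Word.equivPair i).symm_apply_apply w, Word.equivPair_symm]
  rw [critSuffix_rcons, critSuffix_rcons]
  set p := Word.equivPair i w
  split_ifs with hp hmp hmp
  · exact CritLE.refl _
  · exact Or.inl ((length_critSuffix_le _).trans_lt (Nat.lt_succ_self _))
  · exact absurd (plIdeal_mul_subset m p.head hmp) hp
  · exact Or.inr (.single ⟨i, p.head, m * p.head, p.tail.toList, rfl, rfl, ⟨m, rfl⟩⟩)

theorem critLE_smul (s : CoprodI M) (w : Word M) :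
    CritLE (critSuffix w.toList) (critSuffix (s • w).toList) := by
  induction s using CoprodI.induction_on generalizing w with
  | one => rw [one_smul]; exact CritLE.refl _
  | of i m => exact critLE_of_smul m w
  | mul x y hx hy => rw [mul_smul]; exact (hy w).trans (hx (y • w))

end DecidableEq

theorem wellFounded_coprodI (h : ∀ i, WellFounded fun a b : M i => plIdeal b ⊂ plIdeal a) :
    WellFounded fun a b : CoprodI M => plIdeal b ⊂ plIdeal a := by
  classical
  set crit : CoprodI M → List (Σ i, M i) := fun a => critSuffix (Word.equiv a).toList
  have hcrit : ∀ a, plIdeal ((crit a).map fun x => of x.2).prod = plIdeal a := fun a => by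
    rw [plIdeal_prod_critSuffix]
    exact congrArg plIdeal (Word.equiv.symm_apply_apply a)
  refine Subrelation.wf (fun {b a} hab => ?_) (InvImage.wf (fun a => ((crit a).length, crit a))
    (wellFounded_lt.prod_lex (wellFounded_headRel h)))
  obtain ⟨hab, hba⟩ := hab
  obtain ⟨s, rfl⟩ := mem_plIdeal.1 (plIdeal_subset_iff.1 hab)
  rw [← hcrit b, ← hcrit (s * b)] at hba
  have hle : CritLE (crit b) (crit (s * b)) := by
    simpa only [crit, Word.equiv, Equiv.coe_fn_mk, mul_smul] using critLE_smul s (Word.equiv b)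
  rcases hle with hlt | hle
  · exact Prod.Lex.left _ _ hlt
  rcases (Relation.reflGen_iff _ _ _).1 hle with heq | ⟨i, x, x', t, hb, ha, hx'⟩
  · exact absurd (heq ▸ subset_rfl) hba
  by_cases hx : x ∈ plIdeal x'
  · refine absurd (plIdeal_subset_iff.2 ?_) hba
    rw [hb, ha, List.map_cons, List.map_cons, List.prod_cons, List.prod_cons]
    exact mul_mem_plIdeal_mul_right (map_mem_plIdeal of hx) _
  · change Prod.Lex _ _ ((crit b).length, crit b) ((crit (s * b)).length, crit (s * b))
    rw [hb, ha]
    exact Prod.Lex.right _ ⟨i, x, x', t, rfl, rfl, plIdeal_subset_iff.2 hx',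
      fun h => hx (plIdeal_subset_iff.1 h)⟩

theorem accpl_coprodI_iff : ACCPL (CoprodI M) ↔ ∀ i, ACCPL (M i) := by
  classical
  refine ⟨fun h i => h.of_leftInverse of
    ((Pi.evalMonoidHom M i).comp (lift (MonoidHom.mulSingle M))) (fun x => by simp), fun h => ?_⟩
  simp only [accpl_iff_wellFounded] at h ⊢
  exact wellFounded_coprodI h

end CoprodI

/-- free products and restricted direct products satisfy ACCPL iff every
factor does. -/
theorem stmt10 {ι : Type*} (M : ι → Type*) [∀ i, Monoid (M i)] :
    (ACCPL (Monoid.CoprodI M) ↔ ∀ i, ACCPL (M i)) ∧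
    (ACCPL ↥(restrictedDirectProduct M) ↔ ∀ i, ACCPL (M i)) :=
  ⟨accpl_coprodI_iff, accpl_restrictedDirectProduct_iff⟩
end
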